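/- arXiv:2211.14574 — 2 statements merged into one kernel-verified Lean document; each statement's English description precedes it below -/
import Mathlib

section
/- Let A be a real s×s lower-triangular matrix whose diagonal entries are all strictly positive. Then there exists a constant C > 0 such that ‖z (I − zA)⁻¹‖ ≤ C for every z ∈ ℂ with Re(z) ≤ 0. -/
/-!
For `z ≠ 0` we have `z (I − zA)⁻¹ = (z⁻¹ I − A)⁻¹`, the resolvent of `A` at `z⁻¹`, and `z ↦ z⁻¹`
maps the punctured closed left half-plane into itself. The spectrum of a triangular matrix is
its diagonal, which here lies in the open right half-plane, so the closed left half-plane lies in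
the resolvent set. A resolvent is continuous on the resolvent set and tends to `0` at infinity,
hence it is bounded on every closed subset of the resolvent set.
-/

open Matrix Filter

attribute [local instance] Matrix.linftyOpNormedAddCommGroup

theorem Matrix.IsLowerTriangular.spectrum_eq {n K : Type*} [Fintype n] [LinearOrder n]
    [DecidableEq n] [Field K] {M : Matrix n n K} (hM : M.IsLowerTriangular) :
    spectrum K M = Set.range M.diag := by
  ext w
  have hwM : (algebraMap K (Matrix n n K) w - M).IsLowerTriangular :=
    (blockTriangular_diagonal _).sub hM
  rw [spectrum.mem_iff, isUnit_iff_isUnit_det, det_of_isLowerTriangular _ hwM, isUnit_iff_ne_zero,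
    Finset.prod_ne_zero_iff]
  simp [algebraMap_eq_diagonal, sub_eq_zero, eq_comm]

namespace spectrum

variable {𝕜 A : Type*} [NontriviallyNormedField 𝕜] [NormedRing A] [NormedAlgebra 𝕜 A]

theorem continuousOn_resolvent [CompleteSpace A] (a : A) :
    ContinuousOn (resolvent a) (resolventSet 𝕜 a) := fun _ hw ↦
  ((NormedRing.inverse_continuousAt hw.unit).comp (f := fun w : 𝕜 ↦ algebraMap 𝕜 A w - a)
    ((continuous_algebraMap 𝕜 A).sub continuous_const).continuousAt).continuousWithinAt

theorem exists_norm_resolvent_le_of_isClosed [ProperSpace 𝕜] [CompleteSpace A] (a : A)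
    {S : Set 𝕜} (hS : IsClosed S) (hSρ : S ⊆ resolventSet 𝕜 a) :
    ∃ C, ∀ w ∈ S, ‖resolvent a w‖ ≤ C := by
  obtain ⟨R, -, hR⟩ := (hasBasis_cobounded_norm (E := 𝕜)).eventually_iff.1
    ((tendsto_zero_iff_norm_tendsto_zero.1 (resolvent_tendsto_cobounded a)).eventually
      (eventually_le_nhds one_pos))
  obtain ⟨C, hC⟩ := ((isCompact_closedBall (0 : 𝕜) R).inter_left hS).exists_bound_of_continuousOn
    ((continuousOn_resolvent a).mono (Set.inter_subset_left.trans hSρ))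
  refine ⟨max C 1, fun w hw ↦ ?_⟩
  rcases le_total ‖w‖ R with hwR | hRw
  · exact (hC w ⟨hw, mem_closedBall_zero_iff.2 hwR⟩).trans (le_max_left _ _)
  · exact (hR hRw).trans (le_max_right _ _)

theorem smul_inverse_one_sub_smul (a : A) {z : 𝕜} (hz : z ≠ 0) :
    z • Ring.inverse (1 - z • a) = resolvent a z⁻¹ := by
  simpa [resolvent, Units.smul_def, hz] using
    units_smul_resolvent (r := Units.mk0 z hz) (s := 1) (a := z • a)

end spectrum

/-- For a lower-triangular real matrix `A` with strictly positive diagonal,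
`z(I − zA)⁻¹` is uniformly bounded on the closed left half-plane. -/
theorem stmt_7 (s : ℕ) (A : Matrix (Fin s) (Fin s) ℝ)
    (hlow : ∀ i j : Fin s, i < j → A i j = 0)
    (hdiag : ∀ i : Fin s, 0 < A i i) :
    ∃ C : ℝ, 0 < C ∧ ∀ z : ℂ, z.re ≤ 0 →
      ‖z • ((1 : Matrix (Fin s) (Fin s) ℂ) - z • A.map Complex.ofReal)⁻¹‖ ≤ C := by
  let := Matrix.linftyOpNormedRing (n := Fin s) (α := ℂ)
  let := Matrix.linftyOpNormedAlgebra (n := Fin s) (α := ℂ) (R := ℂ)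
  set Ac := A.map Complex.ofReal
  have hAc : Ac.IsLowerTriangular := fun i j hij ↦ by simp [Ac, hlow i j hij]
  have hρ : {w : ℂ | w.re ≤ 0} ⊆ resolventSet ℂ Ac := by
    intro w hw
    rw [spectrum.mem_resolventSet_iff, ← spectrum.notMem_iff, hAc.spectrum_eq]
    rintro ⟨i, rfl⟩
    exact (hdiag i).not_ge (by simpa [Ac] using hw)
  obtain ⟨C, hC⟩ := spectrum.exists_norm_resolvent_le_of_isClosed Ac
    (isClosed_le Complex.continuous_re continuous_const) hρ
  refine ⟨max C 1, one_pos.trans_le (le_max_right _ _), fun z hz ↦ ?_⟩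
  rcases eq_or_ne z 0 with rfl | hz0
  · simp
  have hzinv : z⁻¹.re ≤ 0 := by
    rw [Complex.inv_re]; exact div_nonpos_of_nonpos_of_nonneg hz (Complex.normSq_nonneg z)
  rw [nonsing_inv_eq_ringInverse, spectrum.smul_inverse_one_sub_smul Ac hz0]
  exact (hC _ hzinv).trans (le_max_left _ _)
end

section
/- Let A be a real s×s lower-triangular matrix with all diagonal entries strictly positive, and b ∈ ℝ^s. Then there exist constants C > 0 and ε₀ > 0 such that: for every real lower-triangular s×s matrix à with ‖à − A‖ ≤ ε₀, every b̃ ∈ ℝ^s, every z ∈ ℂ with Re(z) ≤ 0, and every y_n ∈ ℂ, the one-step updates y_{n+1} = (1 + z bᵀ(I − zA)⁻¹e)·y_n and ỹ_{n+1} = (1 + z b̃ᵀ(I − zÃ)⁻¹e)·y_n satisfy |ỹ_{n+1} − y_{n+1}| ≤ C·(‖Ã − A‖ + ‖b̃ − b‖)·|y_n|. -/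
/-! For a lower-triangular `B` with diagonal `≥ δ > 0` and `Re z ≤ 0`, every diagonal entry of
the stage matrix `N = I - zB` satisfies `|N_ii| ≥ δ|z|` and is nonzero, while the off-diagonal
entries are `O(|z|)`. Forward substitution in `N y = z x` therefore divides quantities of size
`|z|` by quantities of size `≥ δ|z|`; with `|B_ij| ≤ M`, each step multiplies the running bound
by at most `1 + M/δ`, which bounds `z N⁻¹` uniformly on the half-plane. Rounding `A` by at most
half its smallest diagonal entry keeps these bounds, and the resolvent identity
`z(Ñ⁻¹ - N⁻¹) = (zÑ⁻¹)(Ã - A)(zN⁻¹)` makes the change of the stability function linear in the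
rounding errors. -/

open Matrix Finset

attribute [local instance] Matrix.linftyOpNormedAddCommGroup

theorem Fin.mul_sum_Iio_pow {R : Type*} [CommRing R] {n : ℕ} (q : R) (i : Fin n) :
    q * ∑ k ∈ Iio i, (1 + q) ^ (k : ℕ) = (1 + q) ^ (i : ℕ) - 1 := by
  have hrange : ∑ k ∈ Iio i, (1 + q) ^ (k : ℕ) = ∑ m ∈ range i, (1 + q) ^ m := by
    rw [← Nat.Iio_eq_range, ← Fin.map_valEmbedding_Iio, sum_map]
    rfl
  rw [hrange, mul_comm, ← geom_sum_mul]
  ring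

theorem Matrix.norm_le_of_isLowerTriangular_mulVec_eq {𝕜 : Type*} [NormedField 𝕜] {n : ℕ}
    {N : Matrix (Fin n) (Fin n) 𝕜} {y r : Fin n → 𝕜} {a q : ℝ}
    (hN : N.IsLowerTriangular) (hdiag : ∀ i, N i i ≠ 0)
    (hr : ∀ i, ‖r i‖ ≤ a * ‖N i i‖) (hoff : ∀ i k, k < i → ‖N i k‖ ≤ q * ‖N i i‖)
    (hNy : N *ᵥ y = r) (i : Fin n) : ‖y i‖ ≤ a * (1 + q) ^ (i : ℕ) := by
  induction i using WellFoundedLT.induction with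
  | _ i ih =>
  have hrow : N i i * y i = r i - ∑ k ∈ Iio i, N i k * y k := by
    rw [← hNy, eq_sub_iff_add_eq, mulVec, dotProduct,
      ← sum_subset (subset_univ (Iic i)) fun k _ hk => by
        rw [hN (by simpa using hk), zero_mul],
      ← Iio_insert, sum_insert (by simp)]
  have hsum : ‖∑ k ∈ Iio i, N i k * y k‖ ≤ ‖N i i‖ * (a * ((1 + q) ^ (i : ℕ) - 1)) :=
    calc ‖∑ k ∈ Iio i, N i k * y k‖ ≤ ∑ k ∈ Iio i, q * ‖N i i‖ * (a * (1 + q) ^ (k : ℕ)) :=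
          (norm_sum_le _ _).trans <| sum_le_sum fun k hk => by
            rw [norm_mul]
            exact mul_le_mul (hoff i k (mem_Iio.1 hk)) (ih k (mem_Iio.1 hk)) (norm_nonneg _)
              ((norm_nonneg _).trans (hoff i k (mem_Iio.1 hk)))
      _ = ‖N i i‖ * (a * (q * ∑ k ∈ Iio i, (1 + q) ^ (k : ℕ))) := by
          simp only [mul_sum]
          exact sum_congr rfl fun k _ => by ring
      _ = ‖N i i‖ * (a * ((1 + q) ^ (i : ℕ) - 1)) := by rw [Fin.mul_sum_Iio_pow]
  refine le_of_mul_le_mul_left ?_ (norm_pos_iff.2 (hdiag i))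
  calc ‖N i i‖ * ‖y i‖ = ‖r i - ∑ k ∈ Iio i, N i k * y k‖ := by rw [← norm_mul, hrow]
    _ ≤ a * ‖N i i‖ + ‖N i i‖ * (a * ((1 + q) ^ (i : ℕ) - 1)) :=
        (norm_sub_le _ _).trans (add_le_add (hr i) hsum)
    _ = ‖N i i‖ * (a * (1 + q) ^ (i : ℕ)) := by ring

theorem Complex.norm_le_norm_one_sub {w : ℂ} (hw : w.re ≤ 0) : ‖w‖ ≤ ‖1 - w‖ := by
  rw [← sq_le_sq₀ (norm_nonneg _) (norm_nonneg _), Complex.sq_norm, Complex.sq_norm,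
    Complex.normSq_apply, Complex.normSq_apply]
  simp only [Complex.sub_re, Complex.sub_im, Complex.one_re, Complex.one_im]
  nlinarith

theorem Matrix.norm_apply_le_linfty_opNorm {m n α : Type*} [Fintype m] [Fintype n]
    [NormedAddCommGroup α] (B : Matrix m n α) (i : m) (j : n) : ‖B i j‖ ≤ ‖B‖ := by
  rw [← coe_nnnorm, ← coe_nnnorm, NNReal.coe_le_coe, linfty_opNNNorm_def]
  exact (single_le_sum (fun _ _ => zero_le) (mem_univ j)).trans
    (le_sup (f := fun i => ∑ j, ‖B i j‖₊) (mem_univ i))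

theorem Matrix.linfty_opNorm_map_ofReal {m n : Type*} [Fintype m] [Fintype n]
    (B : Matrix m n ℝ) : ‖B.map Complex.ofReal‖ = ‖B‖ := by
  simp [linfty_opNorm_def, Complex.nnnorm_real]

theorem norm_ofReal_dotProduct_le {ι : Type*} [Fintype ι] (c : ι → ℝ) (w : ι → ℂ) :
    ‖(fun i => (c i : ℂ)) ⬝ᵥ w‖ ≤ Fintype.card ι * ‖c‖ * ‖w‖ := by
  calc ‖(fun i => (c i : ℂ)) ⬝ᵥ w‖ ≤ ∑ _i : ι, ‖c‖ * ‖w‖ :=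
        (norm_sum_le _ _).trans <| sum_le_sum fun i _ => by
          rw [norm_mul, Complex.norm_real]
          exact mul_le_mul (norm_le_pi_norm c i) (norm_le_pi_norm w i) (norm_nonneg _)
            (norm_nonneg _)
    _ = Fintype.card ι * ‖c‖ * ‖w‖ := by rw [sum_const, card_univ, nsmul_eq_mul, mul_assoc]

theorem exists_pos_forall_le_of_forall_pos {ι : Type*} [Finite ι] {f : ι → ℝ}
    (hf : ∀ i, 0 < f i) : ∃ δ > 0, ∀ i, δ ≤ f i := by
  cases isEmpty_or_nonempty ι
  · exact ⟨1, one_pos, isEmptyElim⟩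
  · obtain ⟨i₀, hi₀⟩ := Finite.exists_min f
    exact ⟨f i₀, hf i₀, hi₀⟩

def stageMatrix {n : ℕ} (B : Matrix (Fin n) (Fin n) ℝ) (z : ℂ) : Matrix (Fin n) (Fin n) ℂ :=
  1 - z • B.map Complex.ofReal

noncomputable def stabilityFunction {n : ℕ} (B : Matrix (Fin n) (Fin n) ℝ) (b : Fin n → ℝ)
    (z : ℂ) : ℂ :=
  1 + z * ((fun i => (b i : ℂ)) ⬝ᵥ ((stageMatrix B z)⁻¹ *ᵥ fun _ => 1))

structure DIRKBounds {n : ℕ} (δ M : ℝ) (B : Matrix (Fin n) (Fin n) ℝ) : Prop where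
  isLowerTriangular : B.IsLowerTriangular
  le_diag : ∀ i, δ ≤ B i i
  abs_apply_le : ∀ i j, |B i j| ≤ M

section StageMatrix

variable {n : ℕ} {A B : Matrix (Fin n) (Fin n) ℝ} {z : ℂ} {δ M : ℝ}

theorem stageMatrix_apply (i j : Fin n) :
    stageMatrix B z i j = (if i = j then 1 else 0) - z * B i j := by
  simp [stageMatrix, one_apply]

theorem stageMatrix_sub_stageMatrix :
    stageMatrix B z - stageMatrix A z = -(z • (B - A).map Complex.ofReal) := by
  rw [stageMatrix, stageMatrix, Matrix.map_sub _ Complex.ofReal_sub, smul_sub]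
  abel

theorem isLowerTriangular_stageMatrix (hB : B.IsLowerTriangular) :
    (stageMatrix B z).IsLowerTriangular := fun i j hij => by
  simp [stageMatrix_apply, hB hij, (show i < j from hij).ne]

theorem norm_mul_le_norm_stageMatrix_apply_self (hz : z.re ≤ 0) {i : Fin n} (hi : 0 ≤ B i i) :
    ‖z‖ * B i i ≤ ‖stageMatrix B z i i‖ := by
  have hre : (z * B i i).re ≤ 0 := by simpa using mul_nonpos_of_nonpos_of_nonneg hz hi
  simpa [stageMatrix_apply, abs_of_nonneg hi] using Complex.norm_le_norm_one_sub hre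

theorem stageMatrix_apply_self_ne_zero (hz : z.re ≤ 0) {i : Fin n} (hi : 0 ≤ B i i) :
    stageMatrix B z i i ≠ 0 := fun h => by
  have := congrArg Complex.re h
  simp [stageMatrix_apply] at this
  nlinarith

theorem isUnit_det_stageMatrix (hB : B.IsLowerTriangular) (hdiag : ∀ i, 0 ≤ B i i)
    (hz : z.re ≤ 0) : IsUnit (stageMatrix B z).det := by
  rw [det_of_isLowerTriangular _ (isLowerTriangular_stageMatrix hB), isUnit_iff_ne_zero,
    prod_ne_zero_iff]
  exact fun i _ => stageMatrix_apply_self_ne_zero hz (hdiag i)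

theorem stageMatrix_mulVec_smul_inv_mulVec (hB : B.IsLowerTriangular) (hdiag : ∀ i, 0 ≤ B i i)
    (hz : z.re ≤ 0) (x : Fin n → ℂ) :
    stageMatrix B z *ᵥ (z • ((stageMatrix B z)⁻¹ *ᵥ x)) = z • x := by
  rw [mulVec_smul, mulVec_mulVec, mul_nonsing_inv _ (isUnit_det_stageMatrix hB hdiag hz),
    one_mulVec]

theorem DIRKBounds.diag_nonneg (hB : DIRKBounds δ M B) (hδ : 0 ≤ δ) (i : Fin n) : 0 ≤ B i i :=
  hδ.trans (hB.le_diag i)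

theorem DIRKBounds.of_norm_sub_le (hAdiag : ∀ i, 2 * δ ≤ A i i)
    (hB : B.IsLowerTriangular) (hBA : ‖B - A‖ ≤ δ) : DIRKBounds δ (‖A‖ + δ) B := by
  have habs (C : Matrix (Fin n) (Fin n) ℝ) (i j : Fin n) : |C i j| ≤ ‖C‖ :=
    (Real.norm_eq_abs _).symm.trans_le (norm_apply_le_linfty_opNorm C i j)
  have hentry (i j : Fin n) : |B i j - A i j| ≤ δ := (habs (B - A) i j).trans hBA
  refine ⟨hB, fun i => ?_, fun i j => ?_⟩
  · linarith [(abs_le.1 (hentry i i)).1, hAdiag i]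
  · linarith [abs_sub_abs_le_abs_sub (B i j) (A i j), hentry i j, habs A i j]

theorem norm_le_of_stageMatrix_mulVec_eq (hB : DIRKBounds δ M B) (hδ : 0 < δ) (hM₀ : 0 ≤ M)
    (hz : z.re ≤ 0) {x y : Fin n → ℂ} (h : stageMatrix B z *ᵥ y = z • x) :
    ‖y‖ ≤ (1 + M / δ) ^ n / δ * ‖x‖ := by
  have hdiag_norm : ∀ i, δ * ‖z‖ ≤ ‖stageMatrix B z i i‖ := fun i =>
    calc δ * ‖z‖ ≤ ‖z‖ * B i i := by rw [mul_comm]; gcongr; exact hB.le_diag i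
      _ ≤ _ := norm_mul_le_norm_stageMatrix_apply_self hz (hB.diag_nonneg hδ.le i)
  have hr : ∀ i, ‖(z • x) i‖ ≤ ‖x‖ / δ * ‖stageMatrix B z i i‖ := fun i =>
    calc ‖(z • x) i‖ ≤ ‖x‖ / δ * (δ * ‖z‖) := by
          rw [Pi.smul_apply, smul_eq_mul, norm_mul,
            show ‖x‖ / δ * (δ * ‖z‖) = ‖z‖ * ‖x‖ by field_simp]
          gcongr
          exact norm_le_pi_norm x i
      _ ≤ _ := by gcongr; exact hdiag_norm i
  have hoff : ∀ i k, k < i → ‖stageMatrix B z i k‖ ≤ M / δ * ‖stageMatrix B z i i‖ :=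
    fun i k hki =>
    calc ‖stageMatrix B z i k‖ ≤ M / δ * (δ * ‖z‖) := by
          rw [stageMatrix_apply, if_neg hki.ne', zero_sub, norm_neg, norm_mul,
            Complex.norm_real, Real.norm_eq_abs,
            show M / δ * (δ * ‖z‖) = ‖z‖ * M by field_simp]
          gcongr
          exact hB.abs_apply_le i k
      _ ≤ _ := by gcongr; exact hdiag_norm i
  refine (pi_norm_le_iff_of_nonneg (by positivity)).2 fun i => ?_
  calc ‖y i‖ ≤ ‖x‖ / δ * (1 + M / δ) ^ (i : ℕ) :=
        norm_le_of_isLowerTriangular_mulVec_eq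
          (isLowerTriangular_stageMatrix hB.isLowerTriangular)
          (fun i => stageMatrix_apply_self_ne_zero hz (hB.diag_nonneg hδ.le i)) hr hoff h i
    _ ≤ ‖x‖ / δ * (1 + M / δ) ^ n := by
        gcongr
        · exact le_add_of_nonneg_right (by positivity)
        · exact i.is_le'
    _ = (1 + M / δ) ^ n / δ * ‖x‖ := by ring

theorem norm_smul_inv_stageMatrix_mulVec_le (hB : DIRKBounds δ M B) (hδ : 0 < δ) (hM₀ : 0 ≤ M)
    (hz : z.re ≤ 0) (x : Fin n → ℂ) :
    ‖z • ((stageMatrix B z)⁻¹ *ᵥ x)‖ ≤ (1 + M / δ) ^ n / δ * ‖x‖ :=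
  norm_le_of_stageMatrix_mulVec_eq hB hδ hM₀ hz <|
    stageMatrix_mulVec_smul_inv_mulVec hB.isLowerTriangular (hB.diag_nonneg hδ.le) hz x

theorem norm_smul_inv_stageMatrix_mulVec_sub_le (hA : DIRKBounds δ M A)
    (hB : DIRKBounds δ M B) (hδ : 0 < δ) (hM₀ : 0 ≤ M) (hz : z.re ≤ 0) (x : Fin n → ℂ) :
    ‖z • ((stageMatrix B z)⁻¹ *ᵥ x) - z • ((stageMatrix A z)⁻¹ *ᵥ x)‖ ≤
      (1 + M / δ) ^ n / δ * ‖B - A‖ * ((1 + M / δ) ^ n / δ * ‖x‖) := by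
  set u := z • ((stageMatrix A z)⁻¹ *ᵥ x)
  have hinv {C : Matrix (Fin n) (Fin n) ℝ} (hC : DIRKBounds δ M C) :=
    stageMatrix_mulVec_smul_inv_mulVec hC.isLowerTriangular (hC.diag_nonneg hδ.le) hz x
  -- resolvent identity: `(I - zB)(ũ - u) = z (B - A) u`
  have hres : stageMatrix B z *ᵥ (z • ((stageMatrix B z)⁻¹ *ᵥ x) - u) =
      z • ((B - A).map Complex.ofReal *ᵥ u) := by
    rw [mulVec_sub, hinv hB, ← sub_add_cancel (stageMatrix B z) (stageMatrix A z),
      add_mulVec, hinv hA, stageMatrix_sub_stageMatrix, neg_mulVec, smul_mulVec]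
    abel
  calc _ ≤ (1 + M / δ) ^ n / δ * ‖(B - A).map Complex.ofReal *ᵥ u‖ :=
        norm_le_of_stageMatrix_mulVec_eq hB hδ hM₀ hz hres
    _ ≤ (1 + M / δ) ^ n / δ * (‖B - A‖ * ‖u‖) := by
        gcongr
        rw [← linfty_opNorm_map_ofReal]
        exact linfty_opNorm_mulVec _ _
    _ ≤ _ := by
        rw [← mul_assoc]
        gcongr
        exact norm_smul_inv_stageMatrix_mulVec_le hA hδ hM₀ hz x

theorem norm_stabilityFunction_sub_le (hA : DIRKBounds δ M A) (hB : DIRKBounds δ M B)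
    (hδ : 0 < δ) (hM₀ : 0 ≤ M) (hz : z.re ≤ 0) (b c : Fin n → ℝ) :
    ‖stabilityFunction B c z - stabilityFunction A b z‖ ≤
      n * ((1 + M / δ) ^ n / δ) *
        (‖c - b‖ + ‖b‖ * ((1 + M / δ) ^ n / δ * ‖B - A‖)) := by
  set K := (1 + M / δ) ^ n / δ
  set e : Fin n → ℂ := fun _ => 1
  set u := z • ((stageMatrix A z)⁻¹ *ᵥ e)
  set v := z • ((stageMatrix B z)⁻¹ *ᵥ e)
  have he : ‖e‖ ≤ 1 := (pi_norm_const_le 1).trans norm_one.le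
  have hv : ‖v‖ ≤ K := (norm_smul_inv_stageMatrix_mulVec_le hB hδ hM₀ hz e).trans
    (mul_le_of_le_one_right (by positivity) he)
  have hvu : ‖v - u‖ ≤ K * ‖B - A‖ * K :=
    (norm_smul_inv_stageMatrix_mulVec_sub_le hA hB hδ hM₀ hz e).trans
      (by gcongr; exact mul_le_of_le_one_right (by positivity) he)
  have hsplit : stabilityFunction B c z - stabilityFunction A b z =
      (fun i => ((c - b) i : ℂ)) ⬝ᵥ v + (fun i => (b i : ℂ)) ⬝ᵥ (v - u) := by
    have hcb : (fun i => ((c - b) i : ℂ)) = (fun i => (c i : ℂ)) - fun i => (b i : ℂ) := by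
      ext; simp
    simp only [stabilityFunction, hcb, u, v, e, dotProduct_smul, sub_dotProduct,
      dotProduct_sub, smul_eq_mul]
    ring
  rw [hsplit]
  calc _ ≤ n * ‖c - b‖ * ‖v‖ + n * ‖b‖ * ‖v - u‖ :=
        (norm_add_le _ _).trans (add_le_add (by simpa using norm_ofReal_dotProduct_le (c - b) v)
          (by simpa using norm_ofReal_dotProduct_le b (v - u)))
    _ ≤ n * ‖c - b‖ * K + n * ‖b‖ * (K * ‖B - A‖ * K) := by gcongr
    _ = _ := by ring

end StageMatrix

/-- Rounding the coefficients of a DIRK method with strictly positive diagonal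
changes one step on the test equation by at most
`C·(‖Ã − A‖ + ‖b̃ − b‖)·|yₙ|`, uniformly over the closed left half-plane. -/
theorem stmt_10 (s : ℕ) (A : Matrix (Fin s) (Fin s) ℝ) (b : Fin s → ℝ)
    (hlow : ∀ i j : Fin s, i < j → A i j = 0)
    (hdiag : ∀ i : Fin s, 0 < A i i) :
    ∃ C : ℝ, 0 < C ∧ ∃ ε₀ : ℝ, 0 < ε₀ ∧
      ∀ At : Matrix (Fin s) (Fin s) ℝ,
        (∀ i j : Fin s, i < j → At i j = 0) → ‖At - A‖ ≤ ε₀ →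
      ∀ bt : Fin s → ℝ, ∀ z : ℂ, z.re ≤ 0 → ∀ yn : ℂ,
        ‖((1 + z * ((fun i => (bt i : ℂ)) ⬝ᵥ
              (((1 : Matrix (Fin s) (Fin s) ℂ) - z • At.map Complex.ofReal)⁻¹ *ᵥ
                (fun _ => 1)))) * yn
           - (1 + z * ((fun i => (b i : ℂ)) ⬝ᵥ
              (((1 : Matrix (Fin s) (Fin s) ℂ) - z • A.map Complex.ofReal)⁻¹ *ᵥ
                (fun _ => 1)))) * yn)‖
          ≤ C * (‖At - A‖ + ‖bt - b‖) * ‖yn‖ := by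
  obtain ⟨δ, hδ, hAδ⟩ := exists_pos_forall_le_of_forall_pos fun i => half_pos (hdiag i)
  have hAdiag : ∀ i, 2 * δ ≤ A i i := fun i => by linarith [hAδ i]
  set K := (1 + (‖A‖ + δ) / δ) ^ s / δ with hKdef
  have hK : 0 ≤ K := by positivity
  refine ⟨s * K * (1 + ‖b‖ * K) + 1, by positivity, δ, hδ,
    fun At hAtlow hAt bt z hz yn => ?_⟩
  have hR := norm_stabilityFunction_sub_le
    (DIRKBounds.of_norm_sub_le hAdiag hlow (by simpa using hδ.le))
    (DIRKBounds.of_norm_sub_le hAdiag hAtlow hAt) hδ (by positivity) hz b bt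
  rw [← hKdef] at hR
  have hsK : 0 ≤ s * K := mul_nonneg (Nat.cast_nonneg s) hK
  rw [← sub_mul, norm_mul]
  gcongr
  refine hR.trans ?_
  nlinarith [norm_nonneg (At - A), norm_nonneg (bt - b), mul_nonneg hsK (norm_nonneg (At - A)),
    mul_nonneg (mul_nonneg hsK (norm_nonneg b)) (mul_nonneg hK (norm_nonneg (bt - b)))]
end
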